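/- For K ≥ 0 let f_K be the normalized Rician fading density, I₀ the modified Bessel function of the first kind of order zero, and Q the first-order Marcum Q-function. Let X and Y be independent real-valued random variables with densities f_{K_m} and f_{K_I} respectively, where K_m, K_I ≥ 0. Let β_m > 0, β_I > 0, γ_t > 0 and N_0 ≥ 0. Then ℙ( β_m·X / (β_I·Y + N_0) < γ_t ) = 1 − (1/2)·∫_0^∞ Q( √(2·K_m), √(γ_t·(β_I·g + N_0)/β_m) )·exp(−K_I − g/2)·I₀(√(2·K_I·g)) dg. (Theorem 1, Case 1: LoS main link and LoS interference link.) -/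

import Mathlib

open MeasureTheory ProbabilityTheory Real Filter Set
open scoped ENNReal NNReal

/-- Modified Bessel function of the first kind of order zero. -/
noncomputable def besselI0 (x : ℝ) : ℝ :=
  ∑' n : ℕ, (x / 2) ^ (2 * n) / ((Nat.factorial n : ℝ)) ^ 2

/-- Normalized Rician (noncentral chi-squared, 2 d.o.f., noncentrality 2K) fading density. -/
noncomputable def ricianPdf (K : ℝ) (h : ℝ) : ℝ :=
  if h < 0 then 0
  else (1 / 2) * Real.exp (-K - h / 2) * ∑' n : ℕ, (K * h / 2) ^ n / ((Nat.factorial n : ℝ)) ^ 2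

/-- Density of the exponential distribution with rate 1 (supported on [0,∞)). -/
noncomputable def expPdf (x : ℝ) : ℝ := if x < 0 then 0 else Real.exp (-x)

/-- First-order Marcum Q-function. -/
noncomputable def marcumQ (a b : ℝ) : ℝ :=
  ∫ x in Set.Ioi b, x * Real.exp (-(x ^ 2 + a ^ 2) / 2) * besselI0 (a * x)

lemma besselI0_nonneg (x : ℝ) : 0 ≤ besselI0 x := by
  apply tsum_nonneg
  intro n
  apply div_nonneg _ (by positivity)
  rw [pow_mul]
  positivity

lemma summable_aux {c : ℝ} (hc : 0 ≤ c) :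
    Summable fun n : ℕ => c ^ n / ((Nat.factorial n : ℝ)) ^ 2 := by
  refine Summable.of_nonneg_of_le (fun n => by positivity) (fun n => ?_)
    (Real.summable_pow_div_factorial c)
  apply div_le_div_of_nonneg_left (by positivity)
    (by exact_mod_cast Nat.factorial_pos n)
  have h1 : (1 : ℝ) ≤ (Nat.factorial n : ℝ) := by
    exact_mod_cast Nat.one_le_iff_ne_zero.mpr (Nat.factorial_pos n).ne'
  nlinarith

lemma besselI0_sqrt {K h : ℝ} (hK : 0 ≤ K) (hh : 0 ≤ h) :
    besselI0 (Real.sqrt (2 * K * h)) = ∑' n : ℕ, (K * h / 2) ^ n / ((Nat.factorial n : ℝ)) ^ 2 := by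
  unfold besselI0
  apply tsum_congr
  intro n
  congr 1
  rw [div_pow, pow_mul, pow_mul, Real.sq_sqrt (by positivity), ← div_pow]
  norm_num
  ring_nf

lemma ricianPdf_nonneg {K : ℝ} (hK : 0 ≤ K) (h : ℝ) : 0 ≤ ricianPdf K h := by
  unfold ricianPdf
  split
  · exact le_refl _
  · rename_i hh
    push_neg at hh
    have : 0 ≤ ∑' n : ℕ, (K * h / 2) ^ n / ((Nat.factorial n : ℝ)) ^ 2 :=
      tsum_nonneg (fun n => by positivity)
    positivity

lemma ricianPdf_eq {K : ℝ} (hK : 0 ≤ K) {h : ℝ} (hh : 0 ≤ h) :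
    ricianPdf K h = (1 / 2) * Real.exp (-K - h / 2) * besselI0 (Real.sqrt (2 * K * h)) := by
  rw [ricianPdf, if_neg (not_lt.mpr hh), besselI0_sqrt hK hh]

lemma measurable_ricianPdf {K : ℝ} (hK : 0 ≤ K) : Measurable (ricianPdf K) := by
  have key : ricianPdf K = fun h => if h < 0 then 0 else
      (1 / 2) * Real.exp (-K - h / 2) *
        (∑' n : ℕ, ENNReal.ofReal ((K * h / 2) ^ n / ((Nat.factorial n : ℝ)) ^ 2)).toReal := by
    funext h
    rw [ricianPdf]
    split
    · rfl
    · rename_i hh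
      push_neg at hh
      rw [← ENNReal.ofReal_tsum_of_nonneg (fun n => by positivity) (summable_aux (by positivity)),
        ENNReal.toReal_ofReal (tsum_nonneg (fun n => by positivity))]
  rw [key]
  apply Measurable.ite measurableSet_Iio measurable_const
  apply Measurable.mul
  · fun_prop
  · apply ENNReal.measurable_toReal.comp
    apply Measurable.ennreal_tsum
    intro n
    apply ENNReal.measurable_ofReal.comp
    fun_prop

lemma sq_image_Ioi {b : ℝ} (hb : 0 ≤ b) : (fun x : ℝ => x ^ 2) '' Ioi b = Ioi (b ^ 2) := by
  ext y
  simp only [mem_image, mem_Ioi]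
  constructor
  · rintro ⟨x, hx, rfl⟩
    exact pow_lt_pow_left₀ hx hb (by norm_num)
  · intro hy
    have hy0 : 0 ≤ y := le_trans (by positivity) hy.le
    refine ⟨Real.sqrt y, ?_, Real.sq_sqrt hy0⟩
    have := Real.sqrt_lt_sqrt (by positivity) hy
    rwa [Real.sqrt_sq hb] at this

lemma marcumQ_eq_integral {K s : ℝ} (hK : 0 ≤ K) (hs : 0 ≤ s) :
    marcumQ (Real.sqrt (2 * K)) (Real.sqrt s) = ∫ h in Ioi s, ricianPdf K h := by
  have hb : (0:ℝ) ≤ Real.sqrt s := Real.sqrt_nonneg s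
  have himg : (fun x : ℝ => x ^ 2) '' Ioi (Real.sqrt s) = Ioi s := by
    rw [sq_image_Ioi hb, Real.sq_sqrt hs]
  rw [← himg]
  rw [integral_image_eq_integral_abs_deriv_smul measurableSet_Ioi
    (fun x _ => (hasDerivAt_pow 2 x).hasDerivWithinAt)
    (fun x hx y hy hxy => by
      simp only [mem_Ioi] at hx hy
      have hx0 : 0 ≤ x := le_trans hb hx.le
      have hy0 : 0 ≤ y := le_trans hb hy.le
      nlinarith [sq_abs x, sq_abs y])]
  unfold marcumQ
  apply setIntegral_congr_fun measurableSet_Ioi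
  intro x hx
  simp only [mem_Ioi] at hx
  have hx0 : 0 < x := lt_of_le_of_lt hb hx
  have hxsq : (0:ℝ) ≤ x ^ 2 := by positivity
  simp only [ricianPdf, if_neg (not_lt.mpr hxsq)]
  have h1 : Real.sqrt (2 * K * x ^ 2) = Real.sqrt (2 * K) * x := by
    rw [Real.sqrt_mul (by positivity), Real.sqrt_sq hx0.le]
  have h2 : besselI0 (Real.sqrt (2 * K) * x) = ∑' n : ℕ, (K * x ^ 2 / 2) ^ n / ((Nat.factorial n : ℝ)) ^ 2 := by
    rw [← h1, besselI0_sqrt hK hxsq]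
  rw [h2]
  have h3 : Real.sqrt (2 * K) ^ 2 = 2 * K := Real.sq_sqrt (by positivity)
  simp only [smul_eq_mul, Nat.cast_ofNat, pow_one]
  rw [h3]
  have : -(x ^ 2 + 2 * K) / 2 = -K - x ^ 2 / 2 := by ring
  rw [this, abs_of_pos (by positivity : (0:ℝ) < 2 * x ^ 1)]
  ring

theorem outage_LoS_LoS
    {Ω : Type*} [MeasureSpace Ω] [IsProbabilityMeasure (ℙ : Measure Ω)]
    (X Y : Ω → ℝ) (hX : Measurable X) (hY : Measurable Y)
    (hXY : IndepFun X Y ℙ)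
    (Km KI : ℝ) (hKm : 0 ≤ Km) (hKI : 0 ≤ KI)
    (hXd : Measure.map X ℙ = volume.withDensity fun x => ENNReal.ofReal (ricianPdf Km x))
    (hYd : Measure.map Y ℙ = volume.withDensity fun x => ENNReal.ofReal (ricianPdf KI x))
    (βm βI γt N₀ : ℝ) (hβm : 0 < βm) (hβI : 0 < βI) (hγt : 0 < γt) (hN₀ : 0 ≤ N₀) :
    (ℙ {ω | βm * X ω / (βI * Y ω + N₀) < γt}).toReal
      = 1 - (1 / 2) * ∫ g in Set.Ioi (0 : ℝ),
          marcumQ (Real.sqrt (2 * Km)) (Real.sqrt (γt * (βI * g + N₀) / βm)) *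
          Real.exp (-KI - g / 2) * besselI0 (Real.sqrt (2 * KI * g)) := by
  set μX := Measure.map X ℙ with hμX
  set μY := Measure.map Y ℙ with hμY
  haveI : IsProbabilityMeasure μX := Measure.isProbabilityMeasure_map hX.aemeasurable
  haveI : IsProbabilityMeasure μY := Measure.isProbabilityMeasure_map hY.aemeasurable
  set t : ℝ → ℝ := fun g => γt * (βI * g + N₀) / βm with ht
  have htm : Measurable t := by fun_prop
  -- a.e. positivity of Y
  have hYIic : ℙ (Y ⁻¹' Iic 0) = 0 := by
    rw [← Measure.map_apply hY measurableSet_Iic, ← hμY, hYd,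
      withDensity_apply _ measurableSet_Iic,
      ← Measure.restrict_congr_set Iio_ae_eq_Iic]
    rw [setLIntegral_congr_fun (g := fun _ => (0:ℝ≥0∞)) measurableSet_Iio
      (fun x (hx : x ∈ Iio 0) => by
        simp [ricianPdf, if_pos (mem_Iio.mp hx)])]
    simp
  have hYpos : ∀ᵐ ω ∂ℙ, 0 < Y ω := by
    rw [ae_iff]
    convert hYIic using 2
    ext ω
    simp [not_lt]
  -- rewrite the event
  have hSm : MeasurableSet {ω | t (Y ω) ≤ X ω} :=
    measurableSet_le (htm.comp hY) hX
  have hevent : ℙ {ω | βm * X ω / (βI * Y ω + N₀) < γt}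
      = ℙ ({ω | t (Y ω) ≤ X ω}ᶜ) := by
    apply measure_congr
    rw [Filter.eventuallyEq_set]
    filter_upwards [hYpos] with ω hω
    simp only [mem_setOf_eq, mem_compl_iff, not_le]
    have hd : 0 < βI * Y ω + N₀ := by positivity
    rw [div_lt_iff₀ hd, ht]
    simp only
    rw [lt_div_iff₀ hβm]
    constructor <;> intro h <;> nlinarith
  -- independence: value of P(S)
  have hSval : ℙ {ω | t (Y ω) ≤ X ω} = ∫⁻ y, μX (Ici (t y)) ∂μY := by
    have hset : MeasurableSet {p : ℝ × ℝ | t p.1 ≤ p.2} :=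
      measurableSet_le (htm.comp measurable_fst) measurable_snd
    have hmap : Measure.map (fun ω => (Y ω, X ω)) ℙ = μY.prod μX :=
      (indepFun_iff_map_prod_eq_prod_map_map hY.aemeasurable hX.aemeasurable).mp hXY.symm
    have hpre : {ω | t (Y ω) ≤ X ω} = (fun ω => (Y ω, X ω)) ⁻¹' {p | t p.1 ≤ p.2} := rfl
    rw [hpre, ← Measure.map_apply (hY.prodMk hX) hset, hmap, Measure.prod_apply hset]
    rfl
  -- CDF-type function measurability
  have hcdfm : Measurable fun s : ℝ => μX (Ici s) :=
    Antitone.measurable (fun a b hab => measure_mono (Ici_subset_Ici.mpr hab))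
  have hfin : ∀ s : ℝ, μX (Ici s) ≤ 1 := fun s => prob_le_one
  -- toReal conversion
  have h1 : ∫ y, (μX (Ici (t y))).toReal ∂μY = (∫⁻ y, μX (Ici (t y)) ∂μY).toReal :=
    integral_toReal ((hcdfm.comp htm).aemeasurable)
      (ae_of_all _ fun y => lt_of_le_of_lt (hfin _) ENNReal.one_lt_top)
  -- tail probability equals marcumQ
  have hQ : ∀ u : ℝ, 0 ≤ u →
      (μX (Ici u)).toReal = marcumQ (Real.sqrt (2 * Km)) (Real.sqrt u) := by
    intro u hu
    have hsing : μX {u} = 0 := by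
      rw [hXd, withDensity_apply _ (measurableSet_singleton u),
        setLIntegral_measure_zero _ _ (measure_singleton u)]
    have hIci : μX (Ici u) = μX (Ioi u) := (measure_congr (Ioi_ae_eq_Ici' hsing)).symm
    rw [marcumQ_eq_integral hKm hu, hIci, hXd, withDensity_apply _ measurableSet_Ioi,
      integral_eq_lintegral_of_nonneg_ae (ae_of_all _ (ricianPdf_nonneg hKm))
        (measurable_ricianPdf hKm).aestronglyMeasurable]
  -- move to volume integral with density
  have hdens : ∫ y, (μX (Ici (t y))).toReal ∂μY
      = ∫ y, ricianPdf KI y * (μX (Ici (t y))).toReal ∂volume := by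
    have hf : Measurable fun y => (ricianPdf KI y).toNNReal :=
      (measurable_ricianPdf hKI).real_toNNReal
    have hwd : μY = volume.withDensity fun y => ((ricianPdf KI y).toNNReal : ℝ≥0∞) := by
      rw [hYd]
      rfl
    rw [hwd, integral_withDensity_eq_integral_smul hf]
    congr 1
    funext y
    rw [NNReal.smul_def, smul_eq_mul, Real.coe_toNNReal _ (ricianPdf_nonneg hKI y)]
  -- restrict to Ioi 0 and rewrite integrand
  have hrestrict : ∫ y, ricianPdf KI y * (μX (Ici (t y))).toReal ∂volume
      = ∫ y in Ioi (0:ℝ), ricianPdf KI y * (μX (Ici (t y))).toReal := by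
    rw [← setIntegral_eq_integral_of_forall_compl_eq_zero
      (s := Ici (0:ℝ)) (fun x hx => by
        rw [ricianPdf, if_pos (by simpa using hx), zero_mul]),
      setIntegral_congr_set Ioi_ae_eq_Ici]
  have hfinal : ∫ y in Ioi (0:ℝ), ricianPdf KI y * (μX (Ici (t y))).toReal
      = ∫ g in Ioi (0:ℝ), (1/2) * (marcumQ (Real.sqrt (2 * Km)) (Real.sqrt (γt * (βI * g + N₀) / βm)) *
          Real.exp (-KI - g / 2) * besselI0 (Real.sqrt (2 * KI * g))) := by
    apply setIntegral_congr_fun measurableSet_Ioi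
    intro g hg
    dsimp only
    have hg0 : 0 < g := mem_Ioi.mp hg
    have htg : 0 ≤ t g := by
      rw [ht]; positivity
    rw [hQ (t g) htg, ricianPdf_eq hKI hg0.le, ht]
    ring
  -- put everything together
  rw [hevent, measure_compl hSm (measure_ne_top _ _), measure_univ,
    ENNReal.toReal_sub_of_le prob_le_one ENNReal.one_ne_top]
  rw [ENNReal.toReal_one, hSval, ← h1, hdens, hrestrict, hfinal, integral_const_mul]
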